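/- arXiv:1811.02687 — 4 statements merged into one kernel-verified Lean document; each statement's English description precedes it below -/
import Mathlib

section
/- Let G be a graph with vertex partition (V_1,...,V_m). Suppose that for every nonempty subset B of the classes, the graph G_B (the induced subgraph on the union of the classes in B with all edges inside classes removed) is not dominated by any vertex set of size at most 2(|B|−1). Then G has an independent transversal. -/
namespace HaxellProof

/-- Evaluate a digit list (most significant first) in base `B`. -/
def evalB (B : ℕ) (l : List ℕ) : ℕ := l.foldl (fun a d => a * B + d) 0

lemma foldl_eval (B : ℕ) : ∀ (l : List ℕ) (x : ℕ),
    l.foldl (fun a d => a * B + d) x = x * B ^ l.length + evalB B l := by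
  intro l
  induction l with
  | nil => intro x; simp [evalB]
  | cons d l ih =>
    intro x
    simp only [List.foldl_cons, List.length_cons, evalB] at *
    rw [ih (x * B + d), ih (0 * B + d)]
    ring

lemma evalB_append (B : ℕ) (X Y : List ℕ) :
    evalB B (X ++ Y) = evalB B X * B ^ Y.length + evalB B Y := by
  rw [evalB, List.foldl_append, foldl_eval]; rfl

lemma evalB_cons (B d : ℕ) (l : List ℕ) :
    evalB B (d :: l) = d * B ^ l.length + evalB B l := by
  rw [evalB, List.foldl_cons, foldl_eval]; ring_nf

lemma evalB_lt (B : ℕ) : ∀ (l : List ℕ), (∀ x ∈ l, x < B) → evalB B l < B ^ l.length := by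
  intro l
  induction l with
  | nil => intro _; simp [evalB]
  | cons d l ih =>
    intro h
    rw [evalB_cons]
    have hd : d < B := h d (by simp)
    have hl : evalB B l < B ^ l.length := ih (fun x hx => h x (by simp [hx]))
    calc d * B ^ l.length + evalB B l < d * B ^ l.length + B ^ l.length := by omega
      _ = (d + 1) * B ^ l.length := by ring
      _ ≤ B * B ^ l.length := Nat.mul_le_mul_right _ hd
      _ = B ^ (d :: l).length := by rw [List.length_cons, pow_succ]; ring

lemma foldl_mono (B : ℕ) : ∀ {X Y : List ℕ}, List.Forall₂ (· ≤ ·) X Y → ∀ {a b : ℕ}, a ≤ b →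
    X.foldl (fun a d => a * B + d) a ≤ Y.foldl (fun a d => a * B + d) b := by
  intro X Y h
  induction h with
  | nil => intro a b hab; simpa using hab
  | cons hxy _ ih =>
    intro a b hab
    simp only [List.foldl_cons]
    exact ih (by have := Nat.mul_le_mul_right B hab; omega)

lemma evalB_mono (B : ℕ) {X Y : List ℕ} (h : List.Forall₂ (· ≤ ·) X Y) :
    evalB B X ≤ evalB B Y := foldl_mono B h le_rfl

lemma evalB_lex (B : ℕ) {P₁ P₂ A' B' : List ℕ} {a b : ℕ}
    (hP : List.Forall₂ (· ≤ ·) P₁ P₂) (hab : a < b)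
    (hA : ∀ x ∈ A', x < B) (hlen : A'.length = B'.length) :
    evalB B (P₁ ++ a :: A') < evalB B (P₂ ++ b :: B') := by
  rw [evalB_append, evalB_append, evalB_cons, evalB_cons]
  have h1 : evalB B P₁ ≤ evalB B P₂ := evalB_mono B hP
  have h2 : evalB B A' < B ^ A'.length := evalB_lt B A' hA
  have h3 : (a :: A').length = (b :: B').length := by simp [hlen]
  have h4 : evalB B P₁ * B ^ (a :: A').length ≤ evalB B P₂ * B ^ (b :: B').length := by
    rw [h3]; exact Nat.mul_le_mul_right _ h1
  have h5 : a * B ^ A'.length + evalB B A' < b * B ^ B'.length := by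
    calc a * B ^ A'.length + evalB B A' < a * B ^ A'.length + B ^ A'.length := by omega
      _ = (a + 1) * B ^ A'.length := by ring
      _ ≤ b * B ^ B'.length := by rw [← hlen]; exact Nat.mul_le_mul_right _ hab
  omega

end HaxellProof



set_option linter.unusedSectionVars false
namespace HaxellProof

variable {V : Type*} [Fintype V] [DecidableEq V] (G : SimpleGraph V) [DecidableRel G.Adj]
variable {m : ℕ} (c : V → Fin m)

/-- Classes used so far: `i₀` plus the classes of the blockers `p.2`. -/
def Bset (i₀ : Fin m) : List (V × V) → Finset (Fin m)
  | [] => {i₀}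
  | p :: L => insert (c p.2) (Bset i₀ L)

/-- Vertices used so far: the waiting vertices `p.1` and blockers `p.2`. -/
def Dset : List (V × V) → Finset V
  | [] => (∅ : Finset V)
  | p :: L => insert p.1 (insert p.2 (Dset L))

/-- partial independent transversal on the classes of `A` (cross-class independence). -/
def PIT (A : Finset (Fin m)) (T : Fin m → V) : Prop :=
  (∀ j ∈ A, c (T j) = j) ∧ ∀ j ∈ A, ∀ k ∈ A, j ≠ k → ¬ G.Adj (T j) (T k)

/-- The invariant of the alternating-tree process. -/
def Inv (S : Finset (Fin m)) (i₀ : Fin m) (T : Fin m → V) : List (V × V) → Prop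
  | [] => True
  | p :: L => Inv S i₀ T L ∧ c p.1 ∈ Bset c i₀ L ∧
      (∀ u ∈ Dset L, ¬ (G.Adj u p.1 ∧ c u ≠ c p.1)) ∧
      G.Adj p.1 p.2 ∧ c p.2 ∈ S ∧ c p.2 ≠ i₀ ∧ c p.2 ∉ Bset c i₀ L ∧ T (c p.2) = p.2

variable {S : Finset (Fin m)} {i₀ : Fin m} {T : Fin m → V}

lemma mem_Bset_self (i₀ : Fin m) : ∀ L, i₀ ∈ Bset c i₀ L := by
  intro L; induction L with
  | nil => simp [Bset]
  | cons p L ih => simp [Bset, ih]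

lemma Bset_suffix (i₀ : Fin m) : ∀ (pre L : List (V × V)), Bset c i₀ L ⊆ Bset c i₀ (pre ++ L) := by
  intro pre L
  induction pre with
  | nil => simp
  | cons p pre ih => exact ih.trans (by simp [Bset, Finset.subset_insert] )

lemma Dset_suffix : ∀ (pre L : List (V × V)), Dset L ⊆ Dset (pre ++ L) := by
  intro pre L
  induction pre with
  | nil => simp
  | cons p pre ih =>
    refine ih.trans ?_
    simp only [List.cons_append, Dset]
    exact (Finset.subset_insert _ _).trans (Finset.subset_insert _ _)

lemma Inv_suffix : ∀ (pre L : List (V × V)), Inv G c S i₀ T (pre ++ L) → Inv G c S i₀ T L := by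
  intro pre L
  induction pre with
  | nil => simp
  | cons p pre ih => intro h; exact ih h.1

lemma mem_Dset : ∀ (L : List (V × V)) (p : V × V), p ∈ L → p.1 ∈ Dset L ∧ p.2 ∈ Dset L := by
  intro L
  induction L with
  | nil => simp
  | cons q L ih =>
    intro p hp
    rcases List.mem_cons.1 hp with rfl | hp
    · simp [Dset]
    · obtain ⟨h1, h2⟩ := ih p hp
      simp only [Dset, Finset.mem_insert]
      exact ⟨Or.inr (Or.inr h1), Or.inr (Or.inr h2)⟩

lemma layer_classes_mem : ∀ (L : List (V × V)), Inv G c S i₀ T L →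
    ∀ p ∈ L, c p.1 ∈ Bset c i₀ L ∧ c p.2 ∈ Bset c i₀ L := by
  intro L
  induction L with
  | nil => simp
  | cons q L ih =>
    intro hInv p hp
    have hsub : Bset c i₀ L ⊆ Bset c i₀ (q :: L) := Bset_suffix c i₀ [q] L
    rcases List.mem_cons.1 hp with rfl | hp
    · exact ⟨hsub hInv.2.1, by simp [Bset]⟩
    · obtain ⟨h1, h2⟩ := ih hInv.1 p hp
      exact ⟨hsub h1, hsub h2⟩

lemma Dset_classes : ∀ (L : List (V × V)), Inv G c S i₀ T L →
    ∀ u ∈ Dset L, c u ∈ Bset c i₀ L := by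
  intro L
  induction L with
  | nil => simp [Dset]
  | cons q L ih =>
    intro hInv u hu
    have hsub : Bset c i₀ L ⊆ Bset c i₀ (q :: L) := Bset_suffix c i₀ [q] L
    rcases Finset.mem_insert.1 hu with rfl | hu
    · exact hsub hInv.2.1
    rcases Finset.mem_insert.1 hu with rfl | hu
    · simp [Bset]
    · exact hsub (ih hInv.1 u hu)

lemma Bset_subset (hi₀ : i₀ ∈ S) : ∀ (L : List (V × V)), Inv G c S i₀ T L →
    Bset c i₀ L ⊆ S := by
  intro L
  induction L with
  | nil => intro _; simpa [Bset] using hi₀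
  | cons q L ih =>
    intro hInv
    simp only [Bset, Finset.insert_subset_iff]
    exact ⟨hInv.2.2.2.2.1, ih hInv.1⟩

lemma card_Bset : ∀ (L : List (V × V)), Inv G c S i₀ T L →
    (Bset c i₀ L).card = L.length + 1 := by
  intro L
  induction L with
  | nil => simp [Bset]
  | cons q L ih =>
    intro hInv
    simp only [Bset, List.length_cons]
    rw [Finset.card_insert_of_notMem hInv.2.2.2.2.2.2.1, ih hInv.1]

lemma card_Dset : ∀ (L : List (V × V)), (Dset L : Finset V).card ≤ 2 * L.length := by
  intro L
  induction L with
  | nil => simp [Dset]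
  | cons q L ih =>
    calc (Dset (q :: L)).card ≤ (insert q.2 (Dset L)).card + 1 := Finset.card_insert_le _ _
      _ ≤ ((Dset L).card + 1) + 1 := by
          have := Finset.card_insert_le q.2 (Dset L); omega
      _ ≤ 2 * (q :: L).length := by simp [List.length_cons]; omega

lemma T_mem_Dset : ∀ (L : List (V × V)), Inv G c S i₀ T L →
    ∀ j ∈ Bset c i₀ L, j ≠ i₀ → T j ∈ Dset L := by
  intro L
  induction L with
  | nil => intro _ j hj hji; simp [Bset] at hj; exact absurd hj hji
  | cons q L ih =>
    intro hInv j hj hji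
    rcases Finset.mem_insert.1 hj with rfl | hj
    · rw [hInv.2.2.2.2.2.2.2]; simp [Dset]
    · have := ih hInv.1 j hj hji
      simp only [Dset, Finset.mem_insert]
      exact Or.inr (Or.inr this)

lemma split_at_class : ∀ (L : List (V × V)), Inv G c S i₀ T L →
    ∀ j ∈ Bset c i₀ L, j ≠ i₀ →
    ∃ pre p rest, L = pre ++ p :: rest ∧ c p.2 = j ∧ j ∉ Bset c i₀ rest := by
  intro L
  induction L with
  | nil => intro _ j hj hji; simp [Bset] at hj; exact absurd hj hji
  | cons q L ih =>
    intro hInv j hj hji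
    by_cases hjL : j ∈ Bset c i₀ L
    · obtain ⟨pre, p, rest, hL, hcp, hrest⟩ := ih hInv.1 j hjL hji
      exact ⟨q :: pre, p, rest, by rw [hL]; rfl, hcp, hrest⟩
    · rcases Finset.mem_insert.1 hj with rfl | hj
      · exact ⟨[], q, L, rfl, rfl, hjL⟩
      · exact absurd hj hjL

lemma Inv_update : ∀ (L : List (V × V)), Inv G c S i₀ T L → ∀ (β : Fin m), β ∉ Bset c i₀ L →
    ∀ (v : V), Inv G c S i₀ (Function.update T β v) L := by
  intro L
  induction L with
  | nil => intro _ β _ v; trivial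
  | cons q L ih =>
    intro hInv β hβ v
    obtain ⟨h1, h2, h3, h4, h5, h6, h7, h8⟩ := hInv
    have hβL : β ∉ Bset c i₀ L := fun h => hβ (Bset_suffix c i₀ [q] L h)
    have hne : c q.2 ≠ β := by
      intro h; exact hβ (by rw [← h]; simp [Bset])
    exact ⟨ih h1 β hβL v, h2, h3, h4, h5, h6, h7, by rw [Function.update_of_ne hne, h8]⟩

end HaxellProof

namespace HaxellProof
variable {V : Type*} [Fintype V] [DecidableEq V] (G : SimpleGraph V) [DecidableRel G.Adj]
variable {m : ℕ}
variable {S : Finset (Fin m)} {i₀ : Fin m} {T : Fin m → V}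

/-- Number of cross-neighbours of `u` in the current partial transversal. -/
def Nb (S : Finset (Fin m)) (i₀ : Fin m) (T : Fin m → V) (u : V) : ℕ :=
  ((S.erase i₀).filter (fun j => G.Adj u (T j))).card

lemma Nb_le (u : V) : Nb G S i₀ T u ≤ m := by
  calc Nb G S i₀ T u ≤ (S.erase i₀).card := Finset.card_filter_le _ _
    _ ≤ Fintype.card (Fin m) := Finset.card_le_univ _
    _ = m := Fintype.card_fin m

/-- The lexicographic potential encoded as a base-(m+2) number. -/
def rank (S : Finset (Fin m)) (i₀ : Fin m) (T : Fin m → V) (L : List (V × V)) (w : V) : ℕ :=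
  evalB (m + 2) ((L.reverse.map (fun p => Nb G S i₀ T p.1)) ++
    Nb G S i₀ T w :: List.replicate (m - (L.length + 1)) (m + 1))

lemma Nb_update_le {u v : V} (hnadj : ¬ G.Adj u v) (β : Fin m) :
    Nb G S i₀ (Function.update T β v) u ≤ Nb G S i₀ T u := by
  apply Finset.card_le_card
  intro j hj
  obtain ⟨hjm, hadj⟩ := Finset.mem_filter.1 hj
  rcases eq_or_ne j β with rfl | hne
  · rw [Function.update_self] at hadj; exact absurd hadj hnadj
  · rw [Function.update_of_ne hne] at hadj
    exact Finset.mem_filter.2 ⟨hjm, hadj⟩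

lemma Nb_update_lt {u v : V} (hnadj : ¬ G.Adj u v) {β : Fin m}
    (hβ : β ∈ S.erase i₀) (hadj : G.Adj u (T β)) :
    Nb G S i₀ (Function.update T β v) u < Nb G S i₀ T u := by
  have hβf : β ∈ (S.erase i₀).filter (fun j => G.Adj u (T j)) :=
    Finset.mem_filter.2 ⟨hβ, hadj⟩
  have hsub : (S.erase i₀).filter (fun j => G.Adj u (Function.update T β v j)) ⊆
      ((S.erase i₀).filter (fun j => G.Adj u (T j))).erase β := by
    intro j hj
    obtain ⟨hjm, hadj'⟩ := Finset.mem_filter.1 hj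
    rcases eq_or_ne j β with rfl | hne
    · rw [Function.update_self] at hadj'; exact absurd hadj' hnadj
    · rw [Function.update_of_ne hne] at hadj'
      exact Finset.mem_erase.2 ⟨hne, Finset.mem_filter.2 ⟨hjm, hadj'⟩⟩
  calc ((S.erase i₀).filter (fun j => G.Adj u (Function.update T β v j))).card
      ≤ (((S.erase i₀).filter (fun j => G.Adj u (T j))).erase β).card := Finset.card_le_card hsub
    _ < ((S.erase i₀).filter (fun j => G.Adj u (T j))).card :=
        Finset.card_erase_lt_of_mem hβf

end HaxellProof

namespace HaxellProof
variable {V : Type*} [Fintype V] [DecidableEq V] (G : SimpleGraph V) [DecidableRel G.Adj]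
variable {m : ℕ} (c : V → Fin m)
variable {S : Finset (Fin m)} {i₀ : Fin m}

lemma forall₂_map {α : Type*} (f g : α → ℕ) : ∀ l : List α, (∀ x ∈ l, f x ≤ g x) →
    List.Forall₂ (· ≤ ·) (l.map f) (l.map g) := by
  intro l
  induction l with
  | nil => intro _; simp
  | cons a l ih =>
    intro h
    simp only [List.map_cons]
    exact List.Forall₂.cons (h a (by simp)) (ih fun x hx => h x (by simp [hx]))

lemma main (hi₀ : i₀ ∈ S)
    (hdom : ∀ B : Finset (Fin m), B.Nonempty → ∀ D : Finset V, (∀ u ∈ D, c u ∈ B) →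
      D.card ≤ 2 * (B.card - 1) → ∃ w : V, c w ∈ B ∧ ∀ u ∈ D, ¬ (G.Adj u w ∧ c u ≠ c w)) :
    ∀ n : ℕ, ∀ (T : Fin m → V) (L : List (V × V)) (w : V),
      Inv G c S i₀ T L → PIT G c (S.erase i₀) T →
      c w ∈ Bset c i₀ L → (∀ u ∈ Dset L, ¬ (G.Adj u w ∧ c u ≠ c w)) →
      rank G S i₀ T L w < n →
      ∃ f, PIT G c S f := by
  intro n
  induction n with
  | zero => intro T L w _ _ _ _ h; exact absurd h (Nat.not_lt_zero _)
  | succ n ih =>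
    intro T L w hInv hPIT hcw hund hrank
    have hBcard : (Bset c i₀ L).card = L.length + 1 := card_Bset G c L hInv
    have hLm : L.length + 1 ≤ m := by
      have h1 := Finset.card_le_univ (Bset c i₀ L)
      rw [hBcard] at h1; simpa [Fintype.card_fin] using h1
    by_cases hbl : ∃ j ∈ S.erase i₀, j ∉ Bset c i₀ L ∧ G.Adj w (T j)
    · -- PUSH a new layer
      obtain ⟨j, hjSe, hjB, hadj⟩ := hbl
      have hjS' : j ∈ S := (Finset.mem_erase.1 hjSe).2
      have hji₀ : j ≠ i₀ := (Finset.mem_erase.1 hjSe).1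
      have hcTj : c (T j) = j := hPIT.1 j hjSe
      set L' : List (V × V) := (w, T j) :: L with hL'
      have hInv' : Inv G c S i₀ T L' := by
        refine ⟨hInv, hcw, hund, hadj, ?_, ?_, ?_, ?_⟩
        · show c (T j) ∈ S; rw [hcTj]; exact hjS'
        · show c (T j) ≠ i₀; rw [hcTj]; exact hji₀
        · show c (T j) ∉ Bset c i₀ L; rw [hcTj]; exact hjB
        · show T (c (T j)) = T j; rw [hcTj]
      have hB'card : (Bset c i₀ L').card = L.length + 2 := by
        rw [card_Bset G c L' hInv']; simp [hL']
      have hL2 : L.length + 2 ≤ m := by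
        have h1 := Finset.card_le_univ (Bset c i₀ L')
        rw [hB'card] at h1; simpa [Fintype.card_fin] using h1
      obtain ⟨w₂, hw₂B, hw₂und⟩ := hdom (Bset c i₀ L') ⟨i₀, mem_Bset_self c i₀ L'⟩
        (Dset L') (Dset_classes G c L' hInv')
        (by rw [card_Bset G c L' hInv']; simpa using card_Dset L')
      have hrank' : rank G S i₀ T L' w₂ < rank G S i₀ T L w := by
        rw [rank, rank]
        have e1 : L'.reverse.map (fun p => Nb G S i₀ T p.1) =
            L.reverse.map (fun p => Nb G S i₀ T p.1) ++ [Nb G S i₀ T w] := by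
          simp [hL']
        have e3 : m - (L'.length + 1) = m - (L.length + 2) := by
          simp only [hL', List.length_cons]
        have e2 : m - (L.length + 1) = (m - (L.length + 2)) + 1 := by omega
        rw [e1, e3, e2, List.replicate_succ]
        have eRR : L.reverse.map (fun p => Nb G S i₀ T p.1) ++ Nb G S i₀ T w ::
              ((m+1) :: List.replicate (m - (L.length + 2)) (m+1))
            = (L.reverse.map (fun p => Nb G S i₀ T p.1) ++ [Nb G S i₀ T w]) ++
              ((m+1) :: List.replicate (m - (L.length + 2)) (m+1)) := by
          simp
        rw [eRR]
        apply evalB_lex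
        · exact List.forall₂_same.2 fun x _ => le_rfl
        · have := Nb_le G (S := S) (i₀ := i₀) (T := T) w₂; omega
        · intro x hx
          rcases List.mem_replicate.1 hx with ⟨_, rfl⟩; omega
        · rfl
      exact ih T L' w₂ hInv' hPIT hw₂B hw₂und (by omega)
    · push_neg at hbl
      have hker : ∀ j ∈ S.erase i₀, j ≠ c w → ¬ G.Adj w (T j) := by
        intro j hjSe hjcw
        by_cases hjB : j ∈ Bset c i₀ L
        · have hji₀ : j ≠ i₀ := (Finset.mem_erase.1 hjSe).1
          have hTj : T j ∈ Dset L := T_mem_Dset G c L hInv j hjB hji₀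
          have := hund (T j) hTj
          have hcTj : c (T j) = j := hPIT.1 j hjSe
          intro hadj
          exact this ⟨hadj.symm, by rw [hcTj]; exact hjcw⟩
        · exact hbl j hjSe hjB
      by_cases hw0 : c w = i₀
      · -- FINISH: we can complete the transversal on S
        refine ⟨Function.update T i₀ w, ?_, ?_⟩
        · intro i hi
          rcases eq_or_ne i i₀ with rfl | hne
          · rw [Function.update_self, hw0]
          · rw [Function.update_of_ne hne]
            exact hPIT.1 i (Finset.mem_erase.2 ⟨hne, hi⟩)
        · intro i hiS k hkS hik
          rcases eq_or_ne i i₀ with rfl | hi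
          · rw [Function.update_self, Function.update_of_ne (Ne.symm hik)]
            exact hker k (Finset.mem_erase.2 ⟨Ne.symm hik, hkS⟩) (by rw [hw0]; exact Ne.symm hik)
          · rcases eq_or_ne k i₀ with rfl | hk
            · rw [Function.update_self, Function.update_of_ne hi]
              intro h
              exact hker i (Finset.mem_erase.2 ⟨hi, hiS⟩) (by rw [hw0]; exact hi) h.symm
            · rw [Function.update_of_ne hi, Function.update_of_ne hk]
              exact hPIT.2 i (Finset.mem_erase.2 ⟨hi, hiS⟩) k (Finset.mem_erase.2 ⟨hk, hkS⟩) hik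
      · -- SWAP: replace the blocker of class `c w` by `w` and recurse
        obtain ⟨pre, p, rest, hLdec, hcp2, hcwB⟩ := split_at_class G c L hInv (c w) hcw hw0
        subst hLdec
        have hInvtail : Inv G c S i₀ T (p :: rest) := Inv_suffix G c pre (p :: rest) hInv
        obtain ⟨hInvrest, hcp1, hundp1, hadjp, hcp2S, hcp2i₀, hcp2B, hTp2⟩ := hInvtail
        have hcwSe : c w ∈ S.erase i₀ := by
          rw [← hcp2]; exact Finset.mem_erase.2 ⟨hcp2i₀, hcp2S⟩
        set T' : Fin m → V := Function.update T (c w) w with hT'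
        have hInv'' : Inv G c S i₀ T' rest := Inv_update G c rest hInvrest (c w) hcwB w
        have hPIT' : PIT G c (S.erase i₀) T' := by
          constructor
          · intro i hi
            rcases eq_or_ne i (c w) with rfl | hne
            · rw [hT', Function.update_self]
            · rw [hT', Function.update_of_ne hne]; exact hPIT.1 i hi
          · intro i hiS k hkS hik
            rcases eq_or_ne i (c w) with rfl | hi
            · rw [hT', Function.update_self, Function.update_of_ne (Ne.symm hik)]
              exact hker k hkS (Ne.symm hik)
            · rcases eq_or_ne k (c w) with rfl | hk
              · rw [hT', Function.update_self, Function.update_of_ne hi]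
                intro h
                exact hker i hiS hi h.symm
              · rw [hT', Function.update_of_ne hi, Function.update_of_ne hk]
                exact hPIT.2 i hiS k hkS hik
        -- vertices of `rest` layers are not adjacent to w
        have hDrest : ∀ u ∈ Dset rest, ¬ G.Adj u w := by
          intro u hu
          have huL : u ∈ Dset (pre ++ p :: rest) := by
            refine Dset_suffix pre (p :: rest) ?_
            exact Dset_suffix [p] rest hu
          have hcu : c u ∈ Bset c i₀ rest := Dset_classes G c rest hInvrest u hu
          have hcune : c u ≠ c w := fun h => hcwB (h ▸ hcu)
          intro hadj
          exact hund u huL ⟨hadj, hcune⟩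
        have hp1w : ¬ G.Adj p.1 w := by
          have hp1L : p.1 ∈ Dset (pre ++ p :: rest) := by
            refine Dset_suffix pre (p :: rest) ?_
            exact (mem_Dset (p :: rest) p (by simp)).1
          have hcune : c p.1 ≠ c w := by
            intro h
            exact hcwB (h ▸ hcp1)
          intro hadj
          exact hund p.1 hp1L ⟨hadj, hcune⟩
        have hNblt : Nb G S i₀ T' p.1 < Nb G S i₀ T p.1 := by
          apply Nb_update_lt G hp1w hcwSe
          rw [← hcp2, hTp2]
          exact hadjp
        have hrank' : rank G S i₀ T' rest p.1 < rank G S i₀ T (pre ++ p :: rest) w := by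
          rw [rank, rank]
          have eR : (pre ++ p :: rest).reverse.map (fun q => Nb G S i₀ T q.1) ++
                Nb G S i₀ T w :: List.replicate (m - ((pre ++ p :: rest).length + 1)) (m+1)
              = (rest.reverse.map (fun q => Nb G S i₀ T q.1)) ++
                Nb G S i₀ T p.1 :: ((pre.reverse.map (fun q => Nb G S i₀ T q.1)) ++
                  Nb G S i₀ T w :: List.replicate (m - ((pre ++ p :: rest).length + 1)) (m+1)) := by
            simp [List.reverse_append]
          rw [eR]
          apply evalB_lex
          · apply forall₂_map
            intro q hq
            apply Nb_update_le
            exact hDrest q.1 (mem_Dset rest q (List.mem_reverse.1 hq)).1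
          · exact hNblt
          · intro x hx
            rcases List.mem_replicate.1 hx with ⟨_, rfl⟩; omega
          · simp only [List.length_replicate, List.length_append, List.length_cons,
              List.length_map, List.length_reverse]
            have : pre.length + (rest.length + 1) + 1 ≤ m := by
              simpa [List.length_append] using hLm
            omega
        exact ih T' rest p.1 hInv'' hPIT' hcp1 hundp1 (by omega)

end HaxellProof

namespace HaxellProof
variable {V : Type*} [Fintype V] [DecidableEq V] (G : SimpleGraph V) [DecidableRel G.Adj]
variable {m : ℕ} (c : V → Fin m)

lemma exists_pit
    (hdom : ∀ B : Finset (Fin m), B.Nonempty → ∀ D : Finset V, (∀ u ∈ D, c u ∈ B) →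
      D.card ≤ 2 * (B.card - 1) → ∃ w : V, c w ∈ B ∧ ∀ u ∈ D, ¬ (G.Adj u w ∧ c u ≠ c w))
    (v₀ : V) : ∀ S : Finset (Fin m), ∃ T, PIT G c S T := by
  intro S
  induction S using Finset.strongInduction with
  | _ S ihS =>
    rcases S.eq_empty_or_nonempty with rfl | ⟨i₀, hi₀⟩
    · exact ⟨fun _ => v₀, by simp [PIT]⟩
    · obtain ⟨T, hT⟩ := ihS (S.erase i₀) (Finset.erase_ssubset hi₀)
      obtain ⟨w, hwB, hwund⟩ := hdom {i₀} ⟨i₀, Finset.mem_singleton_self i₀⟩ ∅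
        (by simp) (by simp)
      exact main G c hi₀ hdom (rank G S i₀ T [] w + 1) T [] w trivial hT
        (by simpa [Bset] using hwB) (by simp [Dset]) (Nat.lt_succ_self _)

end HaxellProof

/-- Theorem (Haxell, domination form): if for every nonempty set `B` of classes,
the graph `G_B` (induced on the union of the classes of `B`, intra-class edges
removed) is not (totally) dominated by any set of at most `2(|B|-1)` of its
vertices, then `G` has an independent transversal. -/
theorem stmt_1 {V : Type*} [Fintype V] [DecidableEq V]
    (G : SimpleGraph V) [DecidableRel G.Adj] (m : ℕ) (c : V → Fin m)
    (hdom : ∀ B : Finset (Fin m), B.Nonempty →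
      ∀ D : Finset V, (∀ u ∈ D, c u ∈ B) → D.card ≤ 2 * (B.card - 1) →
        ∃ w : V, c w ∈ B ∧ ∀ u ∈ D, ¬ (G.Adj u w ∧ c u ≠ c w)) :
    ∃ f : Fin m → V, (∀ i, c (f i) = i) ∧
      ∀ i j, i ≠ j → ¬ G.Adj (f i) (f j) := by
  rcases Nat.eq_zero_or_pos m with rfl | hm
  · exact ⟨fun i => i.elim0, fun i => i.elim0, fun i => i.elim0⟩
  · obtain ⟨v₀, -, -⟩ := hdom {⟨0, hm⟩} ⟨_, Finset.mem_singleton_self _⟩ ∅ (by simp) (by simp)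
    obtain ⟨f, hf1, hf2⟩ := HaxellProof.exists_pit G c hdom v₀ Finset.univ
    exact ⟨f, fun i => hf1 i (Finset.mem_univ i),
      fun i j hij => hf2 i (Finset.mem_univ i) j (Finset.mem_univ j) hij⟩
end

section
/- Let H = (A, B, E) be an r-uniform bipartite hypergraph, let B be a subset of the vertex classes of G^H indexed by S(B) ⊆ A, and let K be a constellation for B in G^H. Then the set of B-vertices covered by the edges of H corresponding to V(K) has size at most (2r−3)(|S(B)|−1). -/
/-- Let `K` be a constellation (disjoint stars with centres `ctr` and nonempty
leaf sets `lvs`, every leaf meeting its centre in `B`, leaves pairwise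
`B`-disjoint, in distinct classes of `S`, with `|S| - 1` leaves in total) for a
set of classes of `G^H` indexed by `S ⊆ A`.  Then the `B`-vertices covered by
the edges of `K` number at most `(2r - 3)(|S| - 1)`. -/
theorem stmt_7 {α β E : Type*} [DecidableEq α] [DecidableEq β] [DecidableEq E]
    (r : ℕ) (hr : 2 ≤ r)
    (eA : E → α) (eB : E → Finset β) (hcard : ∀ e, (eB e).card = r - 1)
    (S : Finset α) (ι : Type*) [Fintype ι] [DecidableEq ι]
    (ctr : ι → E) (lvs : ι → Finset E)
    (hne : ∀ s, (lvs s).Nonempty)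
    (hdisj : ∀ s t, s ≠ t →
      Disjoint (insert (ctr s) (lvs s)) (insert (ctr t) (lvs t)))
    (hctr_not_leaf : ∀ s t, ctr s ∉ lvs t)
    (hstar : ∀ s, ∀ f ∈ lvs s, (eB (ctr s) ∩ eB f).Nonempty)
    (hleaf_ind : ∀ s t, ∀ f ∈ lvs s, ∀ g ∈ lvs t, f ≠ g → Disjoint (eB f) (eB g))
    (hleaf_cls : ∀ s, ∀ f ∈ lvs s, eA f ∈ S)
    (hctr_cls : ∀ s, eA (ctr s) ∈ S)
    (hleaf_distinct : ∀ s t, ∀ f ∈ lvs s, ∀ g ∈ lvs t, f ≠ g → eA f ≠ eA g)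
    (hcount : (Finset.univ.biUnion lvs).card = S.card - 1) :
    ((Finset.univ.image ctr ∪ Finset.univ.biUnion lvs).biUnion eB).card ≤
      (2 * r - 3) * (S.card - 1) := by
  classical
  set L := S.card - 1 with hLdef
  have hL : (Finset.univ.biUnion lvs).card = ∑ s : ι, (lvs s).card := by
    rw [Finset.card_biUnion]
    intro s _ t _ hst
    exact (hdisj s t hst).mono (Finset.subset_insert _ _) (Finset.subset_insert _ _)
  have hsum : ∑ s : ι, (lvs s).card = L := by rw [← hL, hcount]
  have hstarbd : ∀ s : ι, ((insert (ctr s) (lvs s)).biUnion eB).card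
      ≤ (r - 1) + (r - 2) * (lvs s).card := by
    intro s
    rw [Finset.biUnion_insert]
    have h1 : (eB (ctr s) ∪ (lvs s).biUnion eB).card
        ≤ (eB (ctr s)).card + ((lvs s).biUnion (fun f => eB f \ eB (ctr s))).card := by
      refine le_trans (Finset.card_le_card ?_) (Finset.card_union_le _ _)
      intro x hx
      rcases Finset.mem_union.1 hx with h | h
      · exact Finset.mem_union_left _ h
      · by_cases hc : x ∈ eB (ctr s)
        · exact Finset.mem_union_left _ hc
        · rcases Finset.mem_biUnion.1 h with ⟨f, hf, hxf⟩
          exact Finset.mem_union_right _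
            (Finset.mem_biUnion.2 ⟨f, hf, Finset.mem_sdiff.2 ⟨hxf, hc⟩⟩)
    calc (eB (ctr s) ∪ (lvs s).biUnion eB).card
        ≤ (eB (ctr s)).card + ((lvs s).biUnion (fun f => eB f \ eB (ctr s))).card := h1
      _ ≤ (r - 1) + ∑ f ∈ lvs s, (eB f \ eB (ctr s)).card := by
          gcongr
          · exact (hcard _).le
          · exact Finset.card_biUnion_le
      _ ≤ (r - 1) + ∑ f ∈ lvs s, (r - 2) := by
          gcongr with f hf
          have h2 := Finset.card_sdiff_add_card_inter (eB f) (eB (ctr s))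
          have h3 : (eB f ∩ eB (ctr s)).Nonempty := by
            obtain ⟨x, hx⟩ := hstar s f hf
            rw [Finset.mem_inter] at hx
            exact ⟨x, Finset.mem_inter.2 ⟨hx.2, hx.1⟩⟩
          have h4 := Finset.card_pos.2 h3
          have h5 := hcard f
          omega
      _ = (r - 1) + (r - 2) * (lvs s).card := by
          rw [Finset.sum_const, smul_eq_mul, Nat.mul_comm]
  have hUnion : (Finset.univ.image ctr ∪ Finset.univ.biUnion lvs)
      = Finset.univ.biUnion (fun s => insert (ctr s) (lvs s)) := by
    ext e
    simp only [Finset.mem_union, Finset.mem_image, Finset.mem_biUnion, Finset.mem_univ,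
      true_and, Finset.mem_insert]
    constructor
    · rintro (⟨s, rfl⟩ | ⟨s, hs⟩)
      exacts [⟨s, Or.inl rfl⟩, ⟨s, Or.inr hs⟩]
    · rintro ⟨s, rfl | hs⟩
      exacts [Or.inl ⟨s, rfl⟩, Or.inr ⟨s, hs⟩]
  have hn : Fintype.card ι ≤ ∑ s : ι, (lvs s).card := by
    calc Fintype.card ι = ∑ _s : ι, 1 := by simp
      _ ≤ ∑ s : ι, (lvs s).card := Finset.sum_le_sum fun s _ => (hne s).card_pos
  rw [hUnion, Finset.biUnion_biUnion]
  calc (Finset.univ.biUnion fun s => (insert (ctr s) (lvs s)).biUnion eB).card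
      ≤ ∑ s : ι, ((insert (ctr s) (lvs s)).biUnion eB).card := Finset.card_biUnion_le
    _ ≤ ∑ s : ι, ((r - 1) + (r - 2) * (lvs s).card) :=
        Finset.sum_le_sum fun s _ => hstarbd s
    _ = (r - 1) * Fintype.card ι + (r - 2) * ∑ s : ι, (lvs s).card := by
        rw [Finset.sum_add_distrib, Finset.sum_const, Finset.mul_sum]
        simp [Nat.mul_comm]
    _ ≤ (r - 1) * L + (r - 2) * L := by
        have hn' : Fintype.card ι ≤ L := le_of_le_of_eq hn hsum
        exact Nat.add_le_add (Nat.mul_le_mul_left _ hn') (Nat.mul_le_mul_left _ hsum.le)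
    _ = ((r - 1) + (r - 2)) * L := (Nat.add_mul _ _ _).symm
    _ = (2 * r - 3) * L := by congr 1; omega
end

section
/- Let k be a positive integer and let G be a graph with vertex partition (V_1,...,V_m) into independent sets. Suppose for every i and every v ∈ V_i, the vertex v has at most min{k−1, |V_i|−k} neighbours outside V_i. Then G has an independent transversal. -/
/-!
The degree bounds give `deg v + deg w ≤ |V_{c v}|` for all vertices `v`, `w`, a local form of
Haxell's condition, and Haxell's augmenting argument goes through under it. Independent
transversals are built one class `i₀` at a time. Given one, `T`, on the classes `R`, grow a run of
pairs `(b, w)`: `w` is a vertex of `V_{i₀}` or of an earlier blocked class that is adjacent to none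
of the `T b` and `w` found so far, and `b` is the least class of `R` with `T b` adjacent to `w`.
When the run stops, its region `V_{i₀} ∪ ⋃ V_b` still has an uncovered vertex `u`, because each
pair `(b, w)` dominates at most `deg (T b) + deg w ≤ |V_b|` vertices and `V_{i₀} ≠ ∅`; and `u` has
no neighbour among the `T l`, or the run would not have stopped. If `u ∈ V_{i₀}` it extends `T`.
Otherwise `u` replaces `T b` for its class `b`: the run of the new transversal agrees with the old
one until `b` was blocked, picks the same witness there, and then stops or blocks a larger class.
So the sequence of blocked classes grows lexicographically (a run that stops counting as larger),
which can happen only finitely often.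
-/

open Finset Function

namespace SimpleGraph

variable {V ι : Type*} (G : SimpleGraph V) (c : V → ι)

structure IsIndepTransversalOn (R : Finset ι) (T : ι → V) : Prop where
  mem_class : ∀ i ∈ R, c (T i) = i
  not_adj : (R : Set ι).Pairwise fun i j => ¬ G.Adj (T i) (T j)

variable {G c}

theorem IsIndepTransversalOn.mono {R S : Finset ι} {T : ι → V}
    (hT : G.IsIndepTransversalOn c R T) (hSR : S ⊆ R) : G.IsIndepTransversalOn c S T :=
  ⟨fun i hi => hT.mem_class i (hSR hi), hT.not_adj.mono (coe_subset.mpr hSR)⟩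

theorem IsIndepTransversalOn.update [DecidableEq ι] {R : Finset ι} {T : ι → V} {u : V}
    (hT : G.IsIndepTransversalOn c R T) (hu : ∀ l ∈ R, ¬ G.Adj (T l) u) :
    G.IsIndepTransversalOn c (insert (c u) R) (update T (c u) u) := by
  have mem_R {i} (hi : i ∈ insert (c u) R) (hne : i ≠ c u) : i ∈ R :=
    (mem_insert.mp hi).resolve_left hne
  constructor
  · intro i hi
    rcases eq_or_ne i (c u) with rfl | hne
    · simp
    · rw [update_of_ne hne]
      exact hT.mem_class i (mem_R hi hne)
  · intro i hi j hj hij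
    simp only [update_apply]
    split_ifs with hi' hj' hj'
    · exact absurd (hi'.trans hj'.symm) hij
    · exact fun h => hu j (mem_R hj hj') h.symm
    · exact hu i (mem_R hi hi')
    · exact hT.not_adj (mem_R hi hi') (mem_R hj hj') hij

namespace Haxell

variable [LinearOrder ι] [DecidableRel G.Adj] (G)

def conflicts (R : Finset ι) (T : ι → V) (u : V) : Finset ι :=
  {l ∈ R | G.Adj (T l) u}

variable {G}

theorem conflicts_update {R : Finset ι} {T : ι → V} {b : ι} {u w : V} (h : ¬ G.Adj u w) :
    conflicts G R (update T b u) w = (conflicts G R T w).erase b := by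
  ext l
  rcases eq_or_ne l b with rfl | hne
  · simp [conflicts, h]
  · simp [conflicts, hne]

/-- Positions past the end of the run hold `⊤`, so a run that stops where another one blocks a
class ranks above it. -/
def code [Fintype ι] (s : List (ι × V)) : Lex (Fin (Fintype.card ι) → WithTop ι) :=
  toLex fun j => if h : j.1 < s.length then (s[j.1].1 : WithTop ι) else ⊤

theorem code_append_cons_lt [Fintype ι] {P Q r : List (ι × V)} {p : ι × V}
    (hlen : (P ++ p :: Q).length ≤ Fintype.card ι) (hr : ∀ q ∈ r.head?, p.1 < q.1) :
    code (P ++ p :: Q) < code (P ++ r) := by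
  refine ⟨⟨P.length, by simp at hlen; omega⟩, fun j hj => ?_, ?_⟩
  · have hj : j.1 < P.length := hj
    simp [code, hj, List.getElem_append_left, Nat.lt_add_right]
  · cases r with
    | nil => simp [code]
    | cons q r => simpa [code] using hr q rfl

variable [Fintype V] [DecidableEq V] (G c) (i0 : ι) (R : Finset ι)

def region (s : List (ι × V)) : Finset V :=
  ({v | c v = i0} : Finset V) ∪ s.toFinset.biUnion fun p => ({v | c v = p.1} : Finset V)

def covered (T : ι → V) (s : List (ι × V)) : Finset V :=
  s.toFinset.biUnion fun p => G.neighborFinset (T p.1) ∪ G.neighborFinset p.2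

def uncovered (T : ι → V) (s : List (ι × V)) : Finset V :=
  region c i0 s \ covered G T s

/-- The witness is chosen from the uncovered set as a function of that set alone, so changing `T`
off the blocked classes changes `next` only through the conflicts of the witness. -/
noncomputable def next (T : ι → V) (s : List (ι × V)) : Option (ι × V) :=
  if hU : (uncovered G c i0 T s).Nonempty then
    if hC : (conflicts G R T hU.choose).Nonempty then
      some ((conflicts G R T hU.choose).min' hC, hU.choose)
    else none
  else none

def IsRun (T : ι → V) (s : List (ι × V)) : Prop :=
  ∀ t p r, s = t ++ p :: r → next G c i0 R T t = some p

variable {G c i0 R}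

theorem mem_uncovered {T : ι → V} {s : List (ι × V)} {v : V} :
    v ∈ uncovered G c i0 T s ↔
      (c v = i0 ∨ ∃ p ∈ s, c v = p.1) ∧ ∀ p ∈ s, ¬ G.Adj (T p.1) v ∧ ¬ G.Adj p.2 v := by
  simp [uncovered, region, covered, eq_comm]

theorem next_eq_some {T : ι → V} {s : List (ι × V)} {p : ι × V}
    (h : next G c i0 R T s = some p) :
    p.2 ∈ uncovered G c i0 T s ∧ IsLeast (conflicts G R T p.2 : Set ι) p.1 := by
  unfold next at h
  split_ifs at h with hU hC
  cases h
  exact ⟨hU.choose_spec, isLeast_min' _ hC⟩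

theorem next_eq_none {T : ι → V} {s : List (ι × V)} (h : next G c i0 R T s = none)
    (hU : (uncovered G c i0 T s).Nonempty) :
    ∃ u ∈ uncovered G c i0 T s, conflicts G R T u = ∅ := by
  unfold next at h
  split_ifs at h with hC
  exact ⟨hU.choose, hU.choose_spec, not_nonempty_iff_eq_empty.mp hC⟩

theorem fst_notMem_of_next_eq_some {T : ι → V} {s : List (ι × V)} {p : ι × V}
    (h : next G c i0 R T s = some p) : p.1 ∉ s.map Prod.fst := by
  obtain ⟨hu, hl⟩ := next_eq_some h
  simp only [List.mem_map]
  rintro ⟨q, hq, hqp⟩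
  refine ((mem_uncovered.mp hu).2 q hq).1 ?_
  rw [hqp]
  exact (mem_filter.mp hl.1).2

theorem uncovered_update {T : ι → V} {s : List (ι × V)} {b : ι} {u : V}
    (hb : b ∉ s.map Prod.fst) : uncovered G c i0 (update T b u) s = uncovered G c i0 T s := by
  ext v
  simp only [mem_uncovered]
  refine and_congr_right fun _ => forall₂_congr fun p hp => ?_
  rw [update_of_ne (by rintro rfl; exact hb (List.mem_map_of_mem hp))]

theorem next_update {T : ι → V} {s : List (ι × V)} {p : ι × V} {b : ι} {u : V}
    (hb : b ∉ s.map Prod.fst) (h : next G c i0 R T s = some p) (hu : ¬ G.Adj u p.2) :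
    next G c i0 R (update T b u) s =
      if hC : ((conflicts G R T p.2).erase b).Nonempty then
        some (((conflicts G R T p.2).erase b).min' hC, p.2)
      else none := by
  unfold next at h ⊢
  rw [uncovered_update hb]
  split_ifs at h with hU hC
  cases h
  rw [dif_pos hU, conflicts_update hu]

theorem next_update_of_ne {T : ι → V} {s : List (ι × V)} {p : ι × V} {b : ι} {u : V}
    (hb : b ∉ s.map Prod.fst) (h : next G c i0 R T s = some p) (hu : ¬ G.Adj u p.2)
    (hpb : p.1 ≠ b) : next G c i0 R (update T b u) s = some p := by
  have hl : IsLeast ((conflicts G R T p.2).erase b : Set ι) p.1 := by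
    have hl := (next_eq_some h).2
    exact ⟨mem_erase.mpr ⟨hpb, hl.1⟩, fun x hx => hl.2 (mem_of_mem_erase hx)⟩
  rw [next_update hb h hu, dif_pos ⟨p.1, hl.1⟩]
  congr
  exact (isLeast_min' _ _).unique hl

theorem next_update_self {T : ι → V} {s : List (ι × V)} {p : ι × V} {u : V}
    (hb : p.1 ∉ s.map Prod.fst) (h : next G c i0 R T s = some p) (hu : ¬ G.Adj u p.2) :
    ∀ q ∈ next G c i0 R (update T p.1 u) s, p.1 < q.1 := by
  have hl := (next_eq_some h).2
  rw [next_update hb h hu]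
  split_ifs with hC
  · rintro q ⟨⟩
    obtain ⟨hne, hmem⟩ := mem_erase.mp (min'_mem _ hC)
    exact lt_of_le_of_ne (hl.2 hmem) hne.symm
  · rintro q ⟨⟩

theorem uncovered_nonempty {T : ι → V} {s : List (ι × V)}
    (hdeg : ∀ v w, G.degree v + G.degree w ≤ #{u | c u = c v})
    (hT : ∀ p ∈ s, c (T p.1) = p.1) (hs : (s.map Prod.fst).Nodup) (hi0 : i0 ∉ s.map Prod.fst)
    (hcls : ({v | c v = i0} : Finset V).Nonempty) : (uncovered G c i0 T s).Nonempty := by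
  rw [uncovered, sdiff_nonempty]
  intro hsub
  have hdisj : (s.toFinset : Set (ι × V)).PairwiseDisjoint
      fun p => ({v | c v = p.1} : Finset V) := by
    intro p hp q hq hpq
    refine disjoint_filter.mpr fun v _ hvp hvq => hpq ?_
    exact List.inj_on_of_nodup_map hs (List.mem_toFinset.mp hp) (List.mem_toFinset.mp hq)
      (hvp.symm.trans hvq)
  have hi0_disj : Disjoint ({v | c v = i0} : Finset V)
      (s.toFinset.biUnion fun p => {v | c v = p.1}) := by
    simp only [Finset.disjoint_left, mem_filter, mem_univ, true_and, mem_biUnion,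
      List.mem_toFinset]
    rintro v rfl ⟨p, hp, hvp⟩
    exact hi0 (hvp ▸ List.mem_map_of_mem hp)
  have hregion : #(region c i0 s) = #{v | c v = i0} + ∑ p ∈ s.toFinset, #{v | c v = p.1} := by
    rw [region, card_union_of_disjoint hi0_disj, card_biUnion hdisj]
  have hcovered : #(covered G T s) ≤ ∑ p ∈ s.toFinset, #{v | c v = p.1} := by
    refine card_biUnion_le.trans (sum_le_sum fun p hp => (card_union_le _ _).trans ?_)
    rw [card_neighborFinset_eq_degree, card_neighborFinset_eq_degree]
    simpa only [hT p (List.mem_toFinset.mp hp)] using hdeg (T p.1) p.2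
  have := card_le_card hsub
  have := hcls.card_pos
  omega

namespace IsRun

variable {T : ι → V} {s t : List (ι × V)}

theorem nil : IsRun G c i0 R T [] := by
  intro t p r h
  simp at h

theorem of_append (h : IsRun G c i0 R T (s ++ t)) : IsRun G c i0 R T s :=
  fun t' p r e => h t' p (r ++ t) (by simp [e])

theorem next_eq {p : ι × V} {r : List (ι × V)} (h : IsRun G c i0 R T (s ++ p :: r)) :
    next G c i0 R T s = some p :=
  h s p r rfl

theorem append_singleton {p : ι × V} (h : IsRun G c i0 R T s)
    (hp : next G c i0 R T s = some p) : IsRun G c i0 R T (s ++ [p]) := by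
  intro t q r e
  rcases r.eq_nil_or_concat' with rfl | ⟨r, x, rfl⟩
  · obtain ⟨rfl, hpq⟩ := List.append_inj' e rfl
    rw [List.singleton_inj.mp hpq] at hp
    exact hp
  · have e' : s ++ [p] = (t ++ q :: r) ++ [x] := by simpa using e
    exact h t q r (List.append_inj' e' rfl).1

theorem fst_nodup (h : IsRun G c i0 R T s) : (s.map Prod.fst).Nodup := by
  induction s using List.reverseRecOn with
  | nil => simp
  | append_singleton s p ih =>
    rw [List.map_append, List.nodup_append]
    refine ⟨ih h.of_append, List.nodup_singleton _, ?_⟩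
    simp only [List.map_cons, List.map_nil, List.mem_singleton]
    rintro _ ha _ rfl rfl
    exact fst_notMem_of_next_eq_some h.next_eq ha

theorem fst_mem (h : IsRun G c i0 R T s) {p : ι × V} (hp : p ∈ s) : p.1 ∈ R := by
  obtain ⟨t, r, rfl⟩ := List.append_of_mem hp
  exact (mem_filter.mp (next_eq_some h.next_eq).2.1).1

theorem prefix_or_prefix (hs : IsRun G c i0 R T s) (ht : IsRun G c i0 R T t) :
    s <+: t ∨ t <+: s := by
  induction s using List.reverseRecOn with
  | nil => exact Or.inl (List.nil_prefix)
  | append_singleton s p ih =>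
    rcases ih hs.of_append with ⟨_ | ⟨q, r⟩, rfl⟩ | hts
    · exact Or.inr (by simp)
    · have hpq : p = q := Option.some.inj (hs.next_eq.symm.trans ht.next_eq)
      exact Or.inl (by simp [hpq])
    · exact Or.inr (hts.trans (List.prefix_append _ _))

theorem eq_append_of_terminal {f : List (ι × V)} (hs : IsRun G c i0 R T s)
    (hf : IsRun G c i0 R T f) (hfin : next G c i0 R T f = none) :
    ∃ r, f = s ++ r ∧ r.head? = next G c i0 R T s := by
  rcases hs.prefix_or_prefix hf with ⟨_ | ⟨q, r⟩, rfl⟩ | ⟨_ | ⟨q, r⟩, rfl⟩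
  · exact ⟨[], rfl, by simpa using hfin.symm⟩
  · exact ⟨q :: r, rfl, hf.next_eq.symm⟩
  · exact ⟨[], by simp, by simpa using hfin.symm⟩
  · exact absurd (hs.next_eq.symm.trans hfin) (by simp)

theorem update {b : ι} {u : V} (h : IsRun G c i0 R T s) (hb : b ∉ s.map Prod.fst)
    (hu : ∀ p ∈ s, ¬ G.Adj u p.2) : IsRun G c i0 R (update T b u) s := by
  rintro t p r rfl
  simp only [List.map_append, List.map_cons, List.mem_append, List.mem_cons, not_or] at hb
  exact next_update_of_ne hb.1 h.next_eq (hu p (by simp)) (Ne.symm hb.2.1)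

end IsRun

variable [Fintype ι]

theorem IsRun.length_le {T : ι → V} {s : List (ι × V)} (h : IsRun G c i0 R T s) :
    s.length ≤ Fintype.card ι := by
  simpa using h.fst_nodup.length_le_card

theorem exists_terminal_run (T : ι → V) :
    ∃ f, IsRun G c i0 R T f ∧ next G c i0 R T f = none := by
  by_contra! hnext
  have hlong : ∀ n, ∃ s, IsRun G c i0 R T s ∧ s.length = n := by
    intro n
    induction n with
    | zero => exact ⟨[], IsRun.nil, rfl⟩
    | succ n ih =>
      obtain ⟨s, hs, rfl⟩ := ih
      obtain ⟨p, hp⟩ := Option.ne_none_iff_exists'.mp (hnext s hs)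
      exact ⟨s ++ [p], hs.append_singleton hp, by simp⟩
  obtain ⟨s, hs, hlen⟩ := hlong (Fintype.card ι + 1)
  have := hs.length_le
  omega

variable (G c i0 R) in
noncomputable def finalRun (T : ι → V) : List (ι × V) :=
  (exists_terminal_run T : ∃ f, IsRun G c i0 R T f ∧ _).choose

theorem isRun_finalRun (T : ι → V) : IsRun G c i0 R T (finalRun G c i0 R T) :=
  (exists_terminal_run T).choose_spec.1

theorem next_finalRun (T : ι → V) : next G c i0 R T (finalRun G c i0 R T) = none :=
  (exists_terminal_run T).choose_spec.2

theorem code_finalRun_lt_update {T : ι → V} {b : ι} {u : V}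
    (hb : b ∈ (finalRun G c i0 R T).map Prod.fst)
    (hu : ∀ p ∈ finalRun G c i0 R T, ¬ G.Adj u p.2) :
    code (finalRun G c i0 R T) < code (finalRun G c i0 R (update T b u)) := by
  have hrun := isRun_finalRun (G := G) (c := c) (i0 := i0) (R := R) T
  have hlen := hrun.length_le
  have hnodup := hrun.fst_nodup
  obtain ⟨p, hp, rfl⟩ := List.mem_map.mp hb
  obtain ⟨P, Q, hf⟩ := List.append_of_mem hp
  rw [hf] at hrun hu hlen hnodup ⊢
  have hpP : p.1 ∉ P.map Prod.fst := by
    simp only [List.map_append, List.map_cons, List.nodup_append] at hnodup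
    exact fun h => hnodup.2.2 _ h _ List.mem_cons_self rfl
  have hP : IsRun G c i0 R (update T p.1 u) P :=
    hrun.of_append.update hpP fun q hq => hu q (by simp [hq])
  obtain ⟨r, hr, hhead⟩ := hP.eq_append_of_terminal (isRun_finalRun _) (next_finalRun _)
  rw [hr]
  refine code_append_cons_lt hlen ?_
  rw [hhead]
  exact next_update_self hpP hrun.next_eq (hu p (by simp))

theorem exists_isIndepTransversalOn_insert
    (hdeg : ∀ v w, G.degree v + G.degree w ≤ #{u | c u = c v})
    (hi0 : i0 ∉ R) (hcls : ({v | c v = i0} : Finset V).Nonempty) (T : ι → V)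
    (hT : G.IsIndepTransversalOn c R T) : ∃ T', G.IsIndepTransversalOn c (insert i0 R) T' := by
  induction T using
    (InvImage.wf (fun T => code (finalRun G c i0 R T)) wellFounded_gt).induction with
  | _ T ih =>
    have hrun := isRun_finalRun (G := G) (c := c) (i0 := i0) (R := R) T
    have hi0_run : i0 ∉ (finalRun G c i0 R T).map Prod.fst := by
      rw [List.mem_map]
      rintro ⟨p, hp, hpi0⟩
      exact hi0 (hpi0 ▸ hrun.fst_mem hp)
    have hU := uncovered_nonempty hdeg (fun p hp => hT.mem_class p.1 (hrun.fst_mem hp))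
      hrun.fst_nodup hi0_run hcls
    obtain ⟨u, hu, hconf⟩ := next_eq_none (next_finalRun T) hU
    have hfree : ∀ l ∈ R, ¬ G.Adj (T l) u := by
      simpa [conflicts, filter_eq_empty_iff] using hconf
    rw [mem_uncovered] at hu
    rcases hu.1 with hu0 | ⟨p, hp, hup⟩
    · exact ⟨_, hu0 ▸ hT.update hfree⟩
    · refine ih _ (code_finalRun_lt_update ?_ fun q hq h => (hu.2 q hq).2 h.symm)
        ((hT.update hfree).mono (subset_insert _ _))
      exact hup ▸ List.mem_map_of_mem hp

end Haxell

variable (G c) in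
theorem exists_indepTransversal_of_degree_add_degree_le [Fintype V] [DecidableEq V]
    [Fintype ι] [DecidableEq ι] [DecidableRel G.Adj] (hc : Surjective c)
    (hdeg : ∀ v w, G.degree v + G.degree w ≤ #{u | c u = c v}) :
    ∃ f : ι → V, (∀ i, c (f i) = i) ∧ Pairwise fun i j => ¬ G.Adj (f i) (f j) := by
  -- Any order on the classes will do; the `convert`s below reconcile its decidable equality.
  let _ : LinearOrder ι := LinearOrder.lift' _ (Fintype.equivFin ι).injective
  suffices ∀ R : Finset ι, ∃ T, G.IsIndepTransversalOn c R T by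
    obtain ⟨T, hT⟩ := this univ
    exact ⟨T, fun i => hT.mem_class i (mem_univ i),
      fun i j hij => hT.not_adj (mem_univ i) (mem_univ j) hij⟩
  intro R
  induction R using Finset.induction_on with
  | empty => exact ⟨surjInv hc, by simp, by simp⟩
  | insert i0 R hi0 ih =>
    obtain ⟨T, hT⟩ := ih
    convert Haxell.exists_isIndepTransversalOn_insert (fun v w => by convert hdeg v w) hi0
      ⟨surjInv hc i0, by simp [surjInv_eq hc]⟩ T hT

end SimpleGraph

theorem stmt_9_general {V : Type*} [Fintype V] [DecidableEq V]
    (G : SimpleGraph V) [DecidableRel G.Adj] (k m : ℕ)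
    (c : V → Fin m) (hsurj : Function.Surjective c)
    (hdeg : ∀ v : V, (G.degree v : ℤ) ≤
      min ((k : ℤ) - 1)
        (((Finset.univ.filter (fun u => c u = c v)).card : ℤ) - k)) :
    ∃ f : Fin m → V, (∀ i, c (f i) = i) ∧
      ∀ i j, i ≠ j → ¬ G.Adj (f i) (f j) :=
  G.exists_indepTransversal_of_degree_add_degree_le c hsurj fun v w => by
    have hv := hdeg v
    have hw := hdeg w
    simp only [le_min_iff] at hv hw
    omega

/-- If each class of the partition (the fibres of `c`) is independent and every
vertex `v` has at most `min {k - 1, |V_{c v}| - k}` neighbours (all of which lie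
outside its class), then `G` has an independent transversal. -/
theorem stmt_9 {V : Type*} [Fintype V] [DecidableEq V]
    (G : SimpleGraph V) [DecidableRel G.Adj] (k m : ℕ) (hk : 0 < k)
    (c : V → Fin m) (hsurj : Function.Surjective c)
    (hind : ∀ u v, G.Adj u v → c u ≠ c v)
    (hdeg : ∀ v : V, (G.degree v : ℤ) ≤
      min ((k : ℤ) - 1)
        (((Finset.univ.filter (fun u => c u = c v)).card : ℤ) - k)) :
    ∃ f : Fin m → V, (∀ i, c (f i) = i) ∧
      ∀ i j, i ≠ j → ¬ G.Adj (f i) (f j) :=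
  stmt_9_general G k m c hsurj hdeg
end

section
/- Let r ≥ 2 and 0 < ε' be given, and let D be a vertex set of a graph G^H arising from an r-uniform bipartite hypergraph H = (A,B,E), with D ⊇ V(K) for a constellation K with components being stars of at least 2 vertices, |D| < (2+ε')(n−1), and |D \ V(K)| = u < ε'(n−1) for some integer n ≥ 2. Then the number of B-vertices covered by the edges in D is less than (2r−3 + ε'(r−1))(n−1). -/
/-- In the graph `G^H` of an `r`-uniform bipartite hypergraph, let `D ⊇ V(K)`
for a constellation `K` (disjoint stars, centres `ctr`, nonempty leaf sets
`lvs`, each leaf meeting its centre in `B`), with `|D| < (2 + ε')(n - 1)` and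
`|D \ V(K)| < ε'(n - 1)` for some `n ≥ 2`.  Then the `B`-vertices covered by
the edges in `D` number less than `(2r - 3 + ε'(r - 1))(n - 1)`. -/
theorem stmt_17 {α β E : Type*} [DecidableEq β] [DecidableEq E]
    (r : ℕ) (hr : 2 ≤ r) (ε' : ℝ) (hε' : 0 < ε')
    (eA : E → α) (eB : E → Finset β) (hcard : ∀ e, (eB e).card = r - 1)
    (n : ℕ) (hn : 2 ≤ n)
    (D : Finset E) (ι : Type*) [Fintype ι] [DecidableEq ι]
    (ctr : ι → E) (lvs : ι → Finset E)
    (hne : ∀ s, (lvs s).Nonempty)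
    (hdisj : ∀ s t, s ≠ t →
      Disjoint (insert (ctr s) (lvs s)) (insert (ctr t) (lvs t)))
    (hctr_not_leaf : ∀ s t, ctr s ∉ lvs t)
    (hstar : ∀ s, ∀ f ∈ lvs s, (eB (ctr s) ∩ eB f).Nonempty)
    (hK : ∀ s, insert (ctr s) (lvs s) ⊆ D)
    (hDcard : (D.card : ℝ) < (2 + ε') * ((n : ℝ) - 1))
    (hu : ((D \ Finset.univ.biUnion (fun s => insert (ctr s) (lvs s))).card : ℝ)
        < ε' * ((n : ℝ) - 1)) :
    ((D.biUnion eB).card : ℝ) <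
      (2 * (r : ℝ) - 3 + ε' * ((r : ℝ) - 1)) * ((n : ℝ) - 1) := by
  classical
  obtain ⟨t, rfl⟩ : ∃ t, r = t + 2 := ⟨r - 2, by omega⟩
  set VK := Finset.univ.biUnion (fun s => insert (ctr s) (lvs s)) with hVK
  have hVKD : VK ⊆ D := Finset.biUnion_subset.2 fun s _ => hK s
  have hcard' : ∀ e, (eB e).card = t + 1 := fun e => hcard e
  -- per-star bound
  have star_bound : ∀ s : ι,
      2 * ((insert (ctr s) (lvs s)).biUnion eB).card
        ≤ (2 * t + 1) * (insert (ctr s) (lvs s)).card := by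
    intro s
    have hm : 1 ≤ (lvs s).card := Finset.card_pos.2 (hne s)
    have hsub : (insert (ctr s) (lvs s)).biUnion eB ⊆
        eB (ctr s) ∪ (lvs s).biUnion (fun f => eB f \ eB (ctr s)) := by
      intro x hx
      simp only [Finset.mem_biUnion, Finset.mem_insert] at hx
      obtain ⟨e, he, hxe⟩ := hx
      rcases he with rfl | he
      · exact Finset.mem_union_left _ hxe
      · by_cases hx' : x ∈ eB (ctr s)
        · exact Finset.mem_union_left _ hx'
        · exact Finset.mem_union_right _
            (Finset.mem_biUnion.2 ⟨e, he, Finset.mem_sdiff.2 ⟨hxe, hx'⟩⟩)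
    have hleaf : ∀ f ∈ lvs s, (eB f \ eB (ctr s)).card ≤ t := by
      intro f hf
      have h1 : 1 ≤ (eB f ∩ eB (ctr s)).card :=
        Finset.card_pos.2 (by rw [Finset.inter_comm]; exact hstar s f hf)
      have h2 := Finset.card_sdiff_add_card_inter (eB f) (eB (ctr s))
      have hc := hcard' f
      omega
    have hcb : ((lvs s).biUnion (fun f => eB f \ eB (ctr s))).card
        ≤ (lvs s).card * t := by
      calc ((lvs s).biUnion (fun f => eB f \ eB (ctr s))).card
          ≤ ∑ f ∈ lvs s, (eB f \ eB (ctr s)).card := Finset.card_biUnion_le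
        _ ≤ ∑ _f ∈ lvs s, t := Finset.sum_le_sum hleaf
        _ = (lvs s).card * t := by rw [Finset.sum_const, smul_eq_mul]
    have h2 := Finset.card_le_card hsub
    have h3 := Finset.card_union_le (eB (ctr s))
      ((lvs s).biUnion (fun f => eB f \ eB (ctr s)))
    have hctrc := hcard' (ctr s)
    have hins : (insert (ctr s) (lvs s)).card = (lvs s).card + 1 :=
      Finset.card_insert_of_notMem (hctr_not_leaf s s)
    rw [hins]
    nlinarith [hm, h2, h3, hcb, hctrc]
  -- total vertex count of K
  have hVKcard : VK.card = ∑ s, (insert (ctr s) (lvs s)).card :=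
    Finset.card_biUnion (fun s _ s' _ hss' => hdisj s s' hss')
  -- split D
  have hDU : (D \ VK).card + VK.card = D.card :=
    Finset.card_sdiff_add_card_eq_card hVKD
  -- bound on the biUnion
  have hmain : 2 * (D.biUnion eB).card
      ≤ 2 * ((D \ VK).card * (t + 1)) + (2 * t + 1) * VK.card := by
    have hDeq : D = (D \ VK) ∪ VK := (Finset.sdiff_union_of_subset hVKD).symm
    have h1 : (D.biUnion eB).card
        ≤ ((D \ VK).biUnion eB).card + (VK.biUnion eB).card := by
      calc (D.biUnion eB).card
          = (((D \ VK) ∪ VK).biUnion eB).card := by rw [← hDeq]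
        _ = (((D \ VK).biUnion eB) ∪ (VK.biUnion eB)).card := by
            congr 1
            ext x
            simp only [Finset.mem_biUnion, Finset.mem_union]
            constructor
            · rintro ⟨e, he | he, hx⟩
              exacts [Or.inl ⟨e, he, hx⟩, Or.inr ⟨e, he, hx⟩]
            · rintro (⟨e, he, hx⟩ | ⟨e, he, hx⟩)
              exacts [⟨e, Or.inl he, hx⟩, ⟨e, Or.inr he, hx⟩]
        _ ≤ _ := Finset.card_union_le _ _
    have h2 : ((D \ VK).biUnion eB).card ≤ (D \ VK).card * (t + 1) := by
      calc ((D \ VK).biUnion eB).card ≤ ∑ e ∈ D \ VK, (eB e).card :=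
            Finset.card_biUnion_le
        _ = ∑ _e ∈ D \ VK, (t + 1) := by
            exact Finset.sum_congr rfl fun e _ => hcard' e
        _ = (D \ VK).card * (t + 1) := by rw [Finset.sum_const, smul_eq_mul]
    have h3 : (VK.biUnion eB).card
        ≤ ∑ s, ((insert (ctr s) (lvs s)).biUnion eB).card := by
      rw [hVK, Finset.biUnion_biUnion]
      exact Finset.card_biUnion_le
    have h4 : 2 * ∑ s, ((insert (ctr s) (lvs s)).biUnion eB).card
        ≤ (2 * t + 1) * VK.card := by
      rw [hVKcard, Finset.mul_sum, Finset.mul_sum]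
      exact Finset.sum_le_sum fun s _ => star_bound s
    omega
  -- pass to the reals
  have hmainR : 2 * ((D.biUnion eB).card : ℝ)
      ≤ 2 * (((D \ VK).card : ℝ) * ((t : ℝ) + 1))
        + (2 * (t : ℝ) + 1) * (VK.card : ℝ) := by
    exact_mod_cast hmain
  have hDUR : (((D \ VK).card : ℝ)) + (VK.card : ℝ) = (D.card : ℝ) := by
    exact_mod_cast hDU
  have hN : (1 : ℝ) ≤ (n : ℝ) - 1 := by
    have : (2 : ℝ) ≤ (n : ℝ) := by exact_mod_cast hn
    linarith
  have ht : (0 : ℝ) ≤ (t : ℝ) := Nat.cast_nonneg t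
  have hv : (VK.card : ℝ) = (D.card : ℝ) - ((D \ VK).card : ℝ) := by linarith
  have h6 : (2 * (t : ℝ) + 1) * (VK.card : ℝ)
      = (2 * (t : ℝ) + 1) * (D.card : ℝ)
        - (2 * (t : ℝ) + 1) * ((D \ VK).card : ℝ) := by rw [hv]; ring
  have key : 2 * ((D.biUnion eB).card : ℝ)
      ≤ ((D \ VK).card : ℝ) + (2 * (t : ℝ) + 1) * (D.card : ℝ) := by
    nlinarith [hmainR, h6]
  have h7 : (2 * (t : ℝ) + 1) * (D.card : ℝ)
      < (2 * (t : ℝ) + 1) * ((2 + ε') * ((n : ℝ) - 1)) :=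
    mul_lt_mul_of_pos_left hDcard (by linarith)
  push_cast
  nlinarith [key, hu, h7, hN, ht, hε']
end
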